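/- arXiv:1905.04397 — 3 statements merged into one kernel-verified Lean document; each statement's English description precedes it below -/
import Mathlib

section
/- Let x be a real number with x > 3/4 and 16x^3 − 60x^2 + 24x − 3 > 0, and let α ≥ 0. Then there exist real numbers q, r, r̃ with 1 < q < 2, r > 1, r̃ > 1 and 1/r + 1/r̃ = 1, such that: (i) q·r < 4x/3; (ii) 2·q·r̃·(4x − 1) < (2x − 1)^2 (in particular the quantity (2x − 1)^2 − 2·q·r̃·(4x − 1) is positive, so v := (1/2)(−(2x − 1) + √((2x − 1)^2 − 2·q·r̃·(4x − 1))) is a well-defined real number); and (iii) q·r̃·(α − 1) > −2x − v. -/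
/-!
With `A = 4x/3` and `C = (2x-1)^2 / (2(4x-1))`, conditions (i) and (ii) read `q r < A` and
`q r̃ < C`. Conjugate exponents with these bounds exist as soon as `q (1/A + 1/C) < 1`, and
clearing denominators shows that `1/A + 1/C < 1` is the cubic condition, leaving room for some
`q ∈ (1, 2)`. Condition (iii) is then automatic: `√(⋯) ≥ 0` gives `-2x - v ≤ -x - 1/2`, while
`q r̃ < C < x + 1/2` and `α ≥ 0` give `q r̃ (α - 1) > -x - 1/2`.
-/

open Real

lemma exists_one_lt_lt_two_mul_lt_one {s : ℝ} (hs₀ : 0 < s) (hs₁ : s < 1) :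
    ∃ q : ℝ, 1 < q ∧ q < 2 ∧ q * s < 1 := by
  refine ⟨2 / (1 + s), ?_, ?_, ?_⟩
  · rw [lt_div_iff₀ (by positivity)]; linarith
  · rw [div_lt_iff₀ (by positivity)]; linarith
  · rw [div_mul_eq_mul_div, div_lt_one (by positivity)]; linarith

lemma exists_holderConjugate_mul_lt {q A C : ℝ} (hq : 0 < q) (hA : 0 < A) (hC : 0 < C)
    (h : q / A + q / C < 1) :
    ∃ r r' : ℝ, r.HolderConjugate r' ∧ q * r < A ∧ q * r' < C := by
  -- split the slack `1 - q/A - q/C` evenly between the two reciprocal exponents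
  set δ := (1 - q / A - q / C) / 2 with hδ_def
  have hδ : 0 < δ := by linarith
  have mul_inv_lt {B : ℝ} (hB : 0 < B) : q * (q / B + δ)⁻¹ < B := by
    calc q * (q / B + δ)⁻¹ = q / (q / B + δ) := (div_eq_mul_inv q _).symm
      _ < q / (q / B) := div_lt_div_of_pos_left hq (by positivity) (by linarith)
      _ = B := div_div_cancel₀ hq.ne'
  exact ⟨_, _, .inv_inv (by positivity) (by positivity) (by ring), mul_inv_lt hA, mul_inv_lt hC⟩

lemma one_div_add_one_div_lt_one_iff {x : ℝ} (hx : 3 / 4 < x) :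
    1 / (4 * x / 3) + 1 / ((2 * x - 1) ^ 2 / (2 * (4 * x - 1))) < 1 ↔
      0 < 16 * x ^ 3 - 60 * x ^ 2 + 24 * x - 3 := by
  have h2x : (2 * x - 1) ^ 2 ≠ 0 := pow_ne_zero 2 (by linarith)
  have h4x : 4 * x ≠ 0 := by linarith
  have hslack : 1 - (1 / (4 * x / 3) + 1 / ((2 * x - 1) ^ 2 / (2 * (4 * x - 1)))) =
      (16 * x ^ 3 - 60 * x ^ 2 + 24 * x - 3) / (4 * x * (2 * x - 1) ^ 2) := by
    rw [one_div_div, one_div_div, div_add_div _ _ h4x h2x, one_sub_div (mul_ne_zero h4x h2x)]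
    ring
  rw [← sub_pos, hslack, div_pos_iff_of_pos_right (by positivity)]

lemma neg_two_mul_sub_half_lt_mul_sub_one {x α t : ℝ} (hx : 1 / 2 ≤ x) (hα : 0 ≤ α) (ht : 0 ≤ t)
    (htx : 2 * t * (4 * x - 1) < (2 * x - 1) ^ 2) (D : ℝ) :
    -(2 * x) - 1 / 2 * (-(2 * x - 1) + √D) < t * (α - 1) := by
  have ht_lt : t < x + 1 / 2 := by nlinarith
  have := sqrt_nonneg D
  have := mul_nonneg ht hα
  linarith

/-- Exponent selection: if `x > 3/4` with `16x^3 − 60x^2 + 24x − 3 > 0` and `α ≥ 0`, then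
there exist `q, r, r̃` with `1 < q < 2`, `r, r̃ > 1`, `1/r + 1/r̃ = 1`, such that
(i) `q·r < 4x/3`; (ii) `2·q·r̃·(4x − 1) < (2x − 1)^2`; and
(iii) `q·r̃·(α − 1) > −2x − v` where
`v = (1/2)(−(2x − 1) + √((2x − 1)^2 − 2·q·r̃·(4x − 1)))`. -/
theorem exponent_selection (x α : ℝ) (hx : 3 / 4 < x)
    (hcubic : 16 * x ^ 3 - 60 * x ^ 2 + 24 * x - 3 > 0) (hα : 0 ≤ α) :
    ∃ q r rt : ℝ, 1 < q ∧ q < 2 ∧ 1 < r ∧ 1 < rt ∧ 1 / r + 1 / rt = 1 ∧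
      q * r < 4 * x / 3 ∧
      2 * (q * rt) * (4 * x - 1) < (2 * x - 1) ^ 2 ∧
      q * rt * (α - 1) >
        -(2 * x) - (1 / 2) * (-(2 * x - 1) +
          Real.sqrt ((2 * x - 1) ^ 2 - 2 * (q * rt) * (4 * x - 1))) := by
  have h4x : 0 < 4 * x - 1 := by linarith
  have hA : 0 < 4 * x / 3 := by linarith
  have hC : 0 < (2 * x - 1) ^ 2 / (2 * (4 * x - 1)) := by
    have : 0 < 2 * x - 1 := by linarith
    positivity
  obtain ⟨q, hq₁, hq₂, hqs⟩ := exists_one_lt_lt_two_mul_lt_one (by positivity)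
    ((one_div_add_one_div_lt_one_iff hx).2 hcubic)
  obtain ⟨r, rt, hconj, hr, hrt⟩ := exists_holderConjugate_mul_lt (q := q) (by linarith) hA hC
    (by simpa only [mul_add, mul_one_div] using hqs)
  have hqrt : 2 * (q * rt) * (4 * x - 1) < (2 * x - 1) ^ 2 := by
    rw [lt_div_iff₀ (by positivity)] at hrt
    linarith
  refine ⟨q, r, rt, hq₁, hq₂, hconj.lt, hconj.symm.lt,
    by simpa only [one_div] using hconj.inv_add_inv_eq_one, hr, hqrt,
    neg_two_mul_sub_half_lt_mul_sub_one (by linarith) hα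
      (mul_pos (by linarith) hconj.right_pos).le hqrt _⟩
end

section
/- Let (Ω, F, ℙ) be a probability space, F : Ω → ℝ a random variable, and Z : Ω → ℝ an integrable random variable. For a < b define φ_{a,b}(y) = ∫_{−∞}^{y} 𝟙_{[a,b]}(z) dz = min(y, b) − min(y, a). Suppose that ℙ(a ≤ F ≤ b) = 𝔼[φ_{a,b}(F) · Z] for all real a < b. Then the law of F is absolutely continuous with respect to Lebesgue measure, with density f_F(x) = 𝔼[𝟙_{{F > x}} Z]; moreover f_F is continuous on ℝ and satisfies 0 ≤ f_F(x) ≤ 𝔼[|Z|] for all x, so f_F is bounded. -/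
/-!
By Fubini, `∫_a^b 𝔼[𝟙_{F > x} Z] dx = 𝔼[(min(F, b) - min(F, a)) Z] = ℙ(a ≤ F ≤ b)`. Since the
candidate density is bounded by `𝔼|Z|`, this makes `ℙ(F = x) ≤ ε 𝔼|Z|` for every `ε > 0`, so `F` has
no atoms. The integrand `𝟙_{F > x} Z` is then continuous in `x` off the null set `{F = x}`, and
dominated convergence makes the density continuous. A continuous function whose integral over
every interval is nonnegative is nonnegative, and the two measures agree on all intervals.
-/

open MeasureTheory Set Filter Topology

lemma norm_ite_zero_le {E : Type*} [SeminormedAddGroup E] (p : Prop) [Decidable p] (z : E) :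
    ‖if p then z else 0‖ ≤ ‖z‖ := by
  split_ifs <;> simp

lemma volume_real_Ioc_inter_Iio {a b : ℝ} (hab : a ≤ b) (c : ℝ) :
    volume.real (Ioc a b ∩ Iio c) = min c b - min c a := by
  rw [measureReal_congr ((ae_eq_refl _).inter Iio_ae_eq_Iic), Ioc_inter_Iic,
    Real.volume_real_Ioc]
  simp only [min_def, max_def]
  split_ifs <;> linarith

lemma setIntegral_Ioc_ite_lt {a b : ℝ} (hab : a ≤ b) (c z : ℝ) :
    ∫ x in Ioc a b, (if x < c then z else 0) = (min c b - min c a) * z := by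
  have : (fun x : ℝ => if x < c then z else 0) = (Iio c).indicator (fun _ => z) := by
    ext x; rw [indicator_apply]; rfl
  rw [this, setIntegral_indicator measurableSet_Iio, setIntegral_const, smul_eq_mul,
    volume_real_Ioc_inter_Iio hab]

lemma continuousAt_ite_lt {c x : ℝ} (hx : x ≠ c) (z : ℝ) :
    ContinuousAt (fun y : ℝ => if y < c then z else 0) x := by
  have : (fun y : ℝ => if y < c then z else 0) = (Iio c).indicator (fun _ => z) := by
    ext x; rw [indicator_apply]; rfl
  rw [this]
  exact continuousOn_const.continuousAt_indicator (by rwa [frontier_Iio])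

lemma nonneg_of_forall_setIntegral_Ioc_nonneg {f : ℝ → ℝ} (hf : Continuous f)
    (h : ∀ a b, a < b → 0 ≤ ∫ x in Ioc a b, f x) (x : ℝ) : 0 ≤ f x := by
  by_contra! hx
  obtain ⟨l, u, ⟨hlx, hxu⟩, hneg⟩ :=
    mem_nhds_iff_exists_Ioo_subset.1 (hf.continuousAt.eventually_lt continuousAt_const hx)
  have : 0 < ∫ y in x..u, -f y :=
    intervalIntegral.intervalIntegral_pos_of_pos_on (hf.neg.intervalIntegrable _ _)
      (fun y hy => neg_pos.2 (hneg ⟨hlx.trans hy.1, hy.2⟩)) hxu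
  rw [intervalIntegral.integral_of_le hxu.le, integral_neg] at this
  linarith [h x u hxu]

lemma nonpos_of_forall_pos_le_mul {t C : ℝ} (h : ∀ ε > 0, t ≤ ε * C) : t ≤ 0 := by
  have : Tendsto (fun ε : ℝ => ε * C) (𝓝[>] 0) (𝓝 0) := by
    simpa using ((tendsto_id (x := 𝓝 (0 : ℝ))).mul_const C).mono_left nhdsWithin_le_nhds
  exact ge_of_tendsto this (eventually_nhdsWithin_of_forall h)

section

variable {Ω : Type*} [MeasurableSpace Ω] {ℙ : Measure Ω} {F Z : Ω → ℝ}

variable (ℙ F Z) in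
noncomputable def tailIntegral (x : ℝ) : ℝ :=
  ∫ ω, (if x < F ω then Z ω else 0) ∂ℙ

variable (ℙ F Z) in
def IntegrationByPartsIdentity : Prop :=
  ∀ a b : ℝ, a < b →
    (ℙ {ω | a ≤ F ω ∧ F ω ≤ b}).toReal = ∫ ω, (min (F ω) b - min (F ω) a) * Z ω ∂ℙ

lemma integrable_ite_lt (hF : Measurable F) (hZ : Integrable Z ℙ) (x : ℝ) :
    Integrable (fun ω => if x < F ω then Z ω else 0) ℙ := by
  have : (fun ω => if x < F ω then Z ω else 0) = {ω | x < F ω}.indicator Z := by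
    ext ω; rw [indicator_apply]; rfl
  rw [this]
  exact hZ.indicator (hF measurableSet_Ioi)

lemma abs_tailIntegral_le (hZ : Integrable Z ℙ) (x : ℝ) :
    |tailIntegral ℙ F Z x| ≤ ∫ ω, |Z ω| ∂ℙ := by
  simpa only [tailIntegral, Real.norm_eq_abs] using
    norm_integral_le_of_norm_le (f := fun ω => if x < F ω then Z ω else 0) hZ.norm <|
      ae_of_all _ fun _ => norm_ite_zero_le _ _

lemma setIntegral_Ioc_tailIntegral [IsFiniteMeasure ℙ] (hF : Measurable F) (hZ : Integrable Z ℙ)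
    {a b : ℝ} (hab : a ≤ b) :
    ∫ x in Ioc a b, tailIntegral ℙ F Z x = ∫ ω, (min (F ω) b - min (F ω) a) * Z ω ∂ℙ := by
  have hprod : Integrable (fun p : ℝ × Ω => if p.1 < F p.2 then Z p.2 else 0)
      ((volume.restrict (Ioc a b)).prod ℙ) := by
    have : (fun p : ℝ × Ω => if p.1 < F p.2 then Z p.2 else 0) =
        {p : ℝ × Ω | p.1 < F p.2}.indicator (fun p => Z p.2) := by
      ext p; rw [indicator_apply]; rfl
    rw [this]
    exact (hZ.comp_snd _).indicator (measurableSet_lt measurable_fst (hF.comp measurable_snd))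
  simp only [tailIntegral, setIntegral_Ioc_ite_lt hab,
    integral_integral_swap (f := fun x ω => if x < F ω then Z ω else 0) hprod]

lemma continuous_tailIntegral (hF : Measurable F) (hZ : Integrable Z ℙ)
    (hatom : ∀ x, ℙ (F ⁻¹' {x}) = 0) : Continuous (tailIntegral ℙ F Z) := by
  refine continuous_iff_continuousAt.2 fun x => continuousAt_of_dominated
    (Eventually.of_forall fun y => (integrable_ite_lt hF hZ y).aestronglyMeasurable)
    (Eventually.of_forall fun y => ae_of_all _ fun _ => norm_ite_zero_le _ _) hZ.norm ?_
  filter_upwards [measure_eq_zero_iff_ae_notMem.1 (hatom x)] with ω hω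
  exact continuousAt_ite_lt (Ne.symm hω) (Z ω)

variable [IsFiniteMeasure ℙ]

lemma setIntegral_Ioc_tailIntegral_eq_measure (hF : Measurable F) (hZ : Integrable Z ℙ)
    (hibp : IntegrationByPartsIdentity ℙ F Z) {a b : ℝ} (hab : a < b) :
    ∫ x in Ioc a b, tailIntegral ℙ F Z x = (ℙ {ω | a ≤ F ω ∧ F ω ≤ b}).toReal := by
  rw [setIntegral_Ioc_tailIntegral hF hZ hab.le, hibp a b hab]

lemma measure_preimage_singleton_eq_zero (hF : Measurable F) (hZ : Integrable Z ℙ)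
    (hibp : IntegrationByPartsIdentity ℙ F Z) (x : ℝ) : ℙ (F ⁻¹' {x}) = 0 := by
  suffices (ℙ (F ⁻¹' {x})).toReal ≤ 0 by
    simpa [ENNReal.toReal_eq_zero_iff, measure_ne_top] using le_antisymm this ENNReal.toReal_nonneg
  refine nonpos_of_forall_pos_le_mul (C := ∫ ω, |Z ω| ∂ℙ) fun ε hε => ?_
  calc (ℙ (F ⁻¹' {x})).toReal
      ≤ (ℙ {ω | x ≤ F ω ∧ F ω ≤ x + ε}).toReal :=
        ENNReal.toReal_mono (measure_ne_top _ _) (measure_mono fun ω (hω : F ω = x) =>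
          ⟨hω.ge, by linarith⟩)
    _ = ∫ y in Ioc x (x + ε), tailIntegral ℙ F Z y :=
        (setIntegral_Ioc_tailIntegral_eq_measure hF hZ hibp (by linarith)).symm
    _ ≤ (∫ ω, |Z ω| ∂ℙ) * volume.real (Ioc x (x + ε)) :=
        (le_abs_self _).trans <| norm_setIntegral_le_of_norm_le_const measure_Ioc_lt_top
          fun y _ => (Real.norm_eq_abs _).trans_le (abs_tailIntegral_le hZ y)
    _ = ε * ∫ ω, |Z ω| ∂ℙ := by
        rw [Real.volume_real_Ioc_of_le (by linarith), add_sub_cancel_left, mul_comm]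

lemma continuous_tailIntegral_of_ibp (hF : Measurable F) (hZ : Integrable Z ℙ)
    (hibp : IntegrationByPartsIdentity ℙ F Z) : Continuous (tailIntegral ℙ F Z) :=
  continuous_tailIntegral hF hZ (measure_preimage_singleton_eq_zero hF hZ hibp)

lemma tailIntegral_nonneg (hF : Measurable F) (hZ : Integrable Z ℙ)
    (hibp : IntegrationByPartsIdentity ℙ F Z) (x : ℝ) : 0 ≤ tailIntegral ℙ F Z x :=
  nonneg_of_forall_setIntegral_Ioc_nonneg (continuous_tailIntegral_of_ibp hF hZ hibp)
    (fun _ _ hab => (setIntegral_Ioc_tailIntegral_eq_measure hF hZ hibp hab).symm ▸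
      ENNReal.toReal_nonneg) x

lemma map_eq_withDensity_tailIntegral (hF : Measurable F) (hZ : Integrable Z ℙ)
    (hibp : IntegrationByPartsIdentity ℙ F Z) :
    ℙ.map F = volume.withDensity (fun x => ENNReal.ofReal (tailIntegral ℙ F Z x)) := by
  refine Measure.ext_of_Ioc _ _ fun a b hab => ?_
  have hatom : ℙ.map F {a} = 0 := by
    rw [Measure.map_apply hF (measurableSet_singleton a)]
    exact measure_preimage_singleton_eq_zero hF hZ hibp a
  rw [measure_congr (Ioc_ae_eq_Icc' hatom), Measure.map_apply hF measurableSet_Icc,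
    withDensity_apply _ measurableSet_Ioc,
    ← ofReal_integral_eq_lintegral_ofReal
      (continuous_tailIntegral_of_ibp hF hZ hibp).integrableOn_Ioc
      (ae_of_all _ (tailIntegral_nonneg hF hZ hibp)),
    setIntegral_Ioc_tailIntegral_eq_measure hF hZ hibp hab,
    ENNReal.ofReal_toReal (measure_ne_top _ _)]
  rfl

end

/-- Measure-theoretic core of the extended Skorokhod-integral density lemma: if
`ℙ(a ≤ F ≤ b) = 𝔼[φ_{a,b}(F)·Z]` for all `a < b`, where
`φ_{a,b}(y) = min(y,b) − min(y,a)`, then the law of `F` is absolutely continuous with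
respect to Lebesgue measure with density `f_F(x) = 𝔼[𝟙_{F > x} Z]`; moreover `f_F`
is continuous and satisfies `0 ≤ f_F(x) ≤ 𝔼[|Z|]` for all `x`, so `f_F` is bounded. -/
theorem density_from_ibp {Ω : Type*} [MeasurableSpace Ω]
    (ℙ : Measure Ω) [IsProbabilityMeasure ℙ]
    (F Z : Ω → ℝ) (hF : Measurable F) (hZ : Integrable Z ℙ)
    (h : ∀ a b : ℝ, a < b →
      (ℙ {ω | a ≤ F ω ∧ F ω ≤ b}).toReal =
        ∫ ω, (min (F ω) b - min (F ω) a) * Z ω ∂ℙ) :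
    (Measure.map F ℙ) ≪ volume ∧
    Measure.map F ℙ =
      volume.withDensity
        (fun x => ENNReal.ofReal (∫ ω, (if x < F ω then Z ω else 0) ∂ℙ)) ∧
    Continuous (fun x : ℝ => ∫ ω, (if x < F ω then Z ω else 0) ∂ℙ) ∧
    ∀ x : ℝ,
      0 ≤ (∫ ω, (if x < F ω then Z ω else 0) ∂ℙ) ∧
      (∫ ω, (if x < F ω then Z ω else 0) ∂ℙ) ≤ ∫ ω, |Z ω| ∂ℙ := by
  have hmap := map_eq_withDensity_tailIntegral hF hZ h
  exact ⟨hmap ▸ withDensity_absolutelyContinuous _ _, hmap,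
    continuous_tailIntegral_of_ibp hF hZ h,
    fun x => ⟨tailIntegral_nonneg hF hZ h x, (le_abs_self _).trans (abs_tailIntegral_le hZ x)⟩⟩
end

section
/- Let (Ω, F, ℙ) be a probability space, F : Ω → ℝ a random variable, and Z : Ω → ℝ an integrable random variable with 𝔼[Z] = 0. Suppose the law of F is absolutely continuous with respect to Lebesgue measure with density f(x) = 𝔼[𝟙_{{F > x}} Z]. Then for every α ≥ 0 such that 𝔼[|F|^α · |Z|] < ∞, one has sup_{x ∈ ℝ} |x|^α · f(x) ≤ 𝔼[|F|^α · |Z|]. -/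
open MeasureTheory

/-!
Since `𝔼[Z] = 0`, the integrals of `Z` over `{F > x}` and over its complement `{F ≤ x}` are
opposite, so `f x` is bounded in absolute value by either of them. For `x ≥ 0` use `{F > x}`,
for `x < 0` use `{F ≤ x}`: on the chosen set `|x| ≤ |F|`, hence `|x|^α |Z| ≤ |F|^α |Z|` there.
-/

open Set

namespace MeasureTheory

variable {Ω : Type*} [MeasurableSpace Ω] {μ : Measure Ω} {Z : Ω → ℝ} {s : Set Ω}

theorem abs_setIntegral_compl_eq_of_integral_eq_zero (hs : MeasurableSet s)
    (hZ : Integrable Z μ) (hZ0 : ∫ ω, Z ω ∂μ = 0) :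
    |∫ ω in sᶜ, Z ω ∂μ| = |∫ ω in s, Z ω ∂μ| := by
  have hsplit := integral_add_compl hs hZ
  rw [hZ0, add_eq_zero_iff_eq_neg'] at hsplit
  rw [hsplit, abs_neg]

theorem mul_abs_setIntegral_le_integral_mul_abs {g : Ω → ℝ} {c : ℝ} (hs : MeasurableSet s)
    (hZ : Integrable Z μ) (hgZ : Integrable (fun ω => g ω * |Z ω|) μ) (hc : 0 ≤ c)
    (hg : ∀ ω, 0 ≤ g ω) (hcg : ∀ ω ∈ s, c ≤ g ω) :
    c * |∫ ω in s, Z ω ∂μ| ≤ ∫ ω, g ω * |Z ω| ∂μ :=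
  calc c * |∫ ω in s, Z ω ∂μ| ≤ c * ∫ ω in s, |Z ω| ∂μ :=
        mul_le_mul_of_nonneg_left (abs_integral_le_integral_abs) hc
    _ = ∫ ω in s, c * |Z ω| ∂μ := (integral_const_mul c _).symm
    _ ≤ ∫ ω in s, g ω * |Z ω| ∂μ :=
        setIntegral_mono_on (hZ.abs.const_mul c).integrableOn hgZ.integrableOn hs
          fun ω hω => mul_le_mul_of_nonneg_right (hcg ω hω) (abs_nonneg _)
    _ ≤ ∫ ω, g ω * |Z ω| ∂μ :=
        setIntegral_le_integral hgZ (.of_forall fun ω => mul_nonneg (hg ω) (abs_nonneg _))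

end MeasureTheory

theorem weighted_density_bound_general {Ω : Type*} [MeasurableSpace Ω]
    (ℙ : Measure Ω)
    (F Z : Ω → ℝ) (hF : Measurable F) (hZ : Integrable Z ℙ)
    (hZ0 : ∫ ω, Z ω ∂ℙ = 0)
    (f : ℝ → ℝ) (hf : ∀ x : ℝ, f x = ∫ ω, (if x < F ω then Z ω else 0) ∂ℙ)
    (α : ℝ) (hα : 0 ≤ α)
    (hint : Integrable (fun ω => |F ω| ^ α * |Z ω|) ℙ) :
    ∀ x : ℝ, |x| ^ α * f x ≤ ∫ ω, |F ω| ^ α * |Z ω| ∂ℙ := by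
  intro x
  set s := F ⁻¹' Ioi x
  have hs : MeasurableSet s := hF measurableSet_Ioi
  have hfx : f x = ∫ ω in s, Z ω ∂ℙ := by
    rw [hf, ← integral_indicator hs]
    rfl
  have hmono : ∀ ω, |x| ≤ |F ω| → |x| ^ α ≤ |F ω| ^ α := fun ω h =>
    Real.rpow_le_rpow (abs_nonneg x) h hα
  calc |x| ^ α * f x ≤ |x| ^ α * |∫ ω in s, Z ω ∂ℙ| := by
        rw [hfx]; gcongr; exact le_abs_self _
    _ ≤ ∫ ω, |F ω| ^ α * |Z ω| ∂ℙ := by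
        rcases le_or_gt 0 x with hx | hx
        · refine mul_abs_setIntegral_le_integral_mul_abs hs hZ hint (by positivity)
            (fun _ => by positivity) fun ω hω => hmono ω ?_
          exact abs_le_abs_of_nonneg hx (le_of_lt hω)
        · rw [← abs_setIntegral_compl_eq_of_integral_eq_zero hs hZ hZ0]
          refine mul_abs_setIntegral_le_integral_mul_abs hs.compl hZ hint (by positivity)
            (fun _ => by positivity) fun ω hω => hmono ω ?_
          exact abs_le_abs_of_nonpos hx.le (not_lt.mp hω)

/-- Weighted supremum bound on the density: if `Z` is integrable with `𝔼[Z] = 0` and the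
law of `F` is absolutely continuous with density `f(x) = 𝔼[𝟙_{F > x} Z]`, then for every
`α ≥ 0` with `𝔼[|F|^α · |Z|] < ∞`, one has `sup_x |x|^α · f(x) ≤ 𝔼[|F|^α · |Z|]`. -/
theorem weighted_density_bound {Ω : Type*} [MeasurableSpace Ω]
    (ℙ : Measure Ω) [IsProbabilityMeasure ℙ]
    (F Z : Ω → ℝ) (hF : Measurable F) (hZ : Integrable Z ℙ)
    (hZ0 : ∫ ω, Z ω ∂ℙ = 0)
    (f : ℝ → ℝ) (hf : ∀ x : ℝ, f x = ∫ ω, (if x < F ω then Z ω else 0) ∂ℙ)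
    (hd : Measure.map F ℙ = volume.withDensity (fun x => ENNReal.ofReal (f x)))
    (α : ℝ) (hα : 0 ≤ α)
    (hint : Integrable (fun ω => |F ω| ^ α * |Z ω|) ℙ) :
    ∀ x : ℝ, |x| ^ α * f x ≤ ∫ ω, |F ω| ^ α * |Z ω| ∂ℙ :=
  weighted_density_bound_general ℙ F Z hF hZ hZ0 f hf α hα hint
end
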